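/- Let d₁, d₂ ≥ 1, r ∈ [0, d₂/2), α ≥ 0 with α + 2r > (d₁+2d₂)/2, and let ϱ₁(x,y) = |x'-y'| + |x''-y''|^{1/2} on ℝ^{d₁}×ℝ^{d₂}. Then there is a constant C (depending on d₁,d₂,α,r) such that for all y, ∫_{ℝ^{d₁}×ℝ^{d₂}} (1 + |x''-y''|/(1+|y'|))^{-2r} (1 + ϱ₁(x,y))^{-2α} dx ≤ C (1+|y'|)^{d₂}. -/

import Mathlib

/-!
Split `α = α' + α''` with `2 α' > d₁` and `2 r + α'' > d₂`. Since `(1 + √b)² ≥ 1 + b` and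
`1 + ‖y'‖ ≥ 1`, the integrand is bounded by the product
`(1 + ‖x' - y'‖)^(-2α') · (1 + ‖x'' - y''‖ / (1 + ‖y'‖))^(-(2r + α''))`, whose integral
factorises. The first factor integrates to a constant, and rescaling `x''` by `1 + ‖y'‖`
turns the second into `(1 + ‖y'‖)^d₂` times a constant.
-/

open MeasureTheory Module Real

lemma one_add_sqrt_rpow_neg_two_mul_le {b β : ℝ} (hb : 0 ≤ b) (hβ : 0 ≤ β) :
    (1 + √b) ^ (-(2 * β)) ≤ (1 + b) ^ (-β) := by
  have hsq : 1 + b ≤ (1 + √b) ^ 2 := by nlinarith [sq_sqrt hb, sqrt_nonneg b]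
  calc (1 + √b) ^ (-(2 * β)) = ((1 + √b) ^ 2) ^ (-β) := by
        rw [← rpow_natCast, ← rpow_mul (by positivity)]; ring_nf
    _ ≤ (1 + b) ^ (-β) := rpow_le_rpow_of_nonpos (by positivity) hsq (by linarith)

lemma mixed_weight_le_product_weight {r α' α'' t a b : ℝ} (hα' : 0 ≤ α') (hα'' : 0 ≤ α'')
    (ht : 1 ≤ t) (ha : 0 ≤ a) (hb : 0 ≤ b) :
    (1 + b / t) ^ (-(2 * r)) * (1 + (a + √b)) ^ (-(2 * (α' + α''))) ≤
      (1 + a) ^ (-(2 * α')) * (1 + b / t) ^ (-(2 * r + α'')) := by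
  have hbt : b / t ≤ b := div_le_self hb ht
  have hsqrt : 0 ≤ √b := sqrt_nonneg b
  have hsplit : (1 + (a + √b)) ^ (-(2 * (α' + α''))) =
      (1 + (a + √b)) ^ (-(2 * α')) * (1 + (a + √b)) ^ (-(2 * α'')) := by
    rw [← rpow_add (by positivity)]; ring_nf
  have hfirst : (1 + (a + √b)) ^ (-(2 * α')) ≤ (1 + a) ^ (-(2 * α')) :=
    rpow_le_rpow_of_nonpos (by positivity) (by linarith) (by linarith)
  have hsecond : (1 + (a + √b)) ^ (-(2 * α'')) ≤ (1 + b / t) ^ (-α'') :=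
    calc (1 + (a + √b)) ^ (-(2 * α'')) ≤ (1 + √b) ^ (-(2 * α'')) :=
          rpow_le_rpow_of_nonpos (by positivity) (by linarith) (by linarith)
      _ ≤ (1 + b) ^ (-α'') := one_add_sqrt_rpow_neg_two_mul_le hb hα''
      _ ≤ (1 + b / t) ^ (-α'') :=
          rpow_le_rpow_of_nonpos (by positivity) (by linarith) (by linarith)
  calc (1 + b / t) ^ (-(2 * r)) * (1 + (a + √b)) ^ (-(2 * (α' + α'')))
      ≤ (1 + b / t) ^ (-(2 * r)) * ((1 + a) ^ (-(2 * α')) * (1 + b / t) ^ (-α'')) := by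
        rw [hsplit]; gcongr
    _ = (1 + a) ^ (-(2 * α')) * (1 + b / t) ^ (-(2 * r + α'')) := by
        rw [mul_left_comm, ← rpow_add (by positivity)]; ring_nf

section Rescaling

variable {E : Type*} [NormedAddCommGroup E] [NormedSpace ℝ E]

lemma one_add_norm_sub_div_eq {t : ℝ} (ht : 0 < t) (v y : E) :
    1 + ‖v - y‖ / t = 1 + ‖t⁻¹ • (v - y)‖ := by
  rw [norm_smul, norm_inv, norm_of_nonneg ht.le, inv_mul_eq_div]

variable [FiniteDimensional ℝ E] [MeasurableSpace E] [BorelSpace E] (μ : Measure E)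
  [μ.IsAddHaarMeasure]

lemma integrable_one_add_norm_sub_div_rpow {s t : ℝ} (hs : (finrank ℝ E : ℝ) < s) (ht : 0 < t)
    (y : E) : Integrable (fun v ↦ (1 + ‖v - y‖ / t) ^ (-s)) μ := by
  simp_rw [one_add_norm_sub_div_eq ht]
  exact ((integrable_comp_smul_iff μ (fun w : E ↦ (1 + ‖w‖) ^ (-s)) (inv_ne_zero ht.ne')).2
    (integrable_one_add_norm hs)).comp_sub_right y

lemma integral_one_add_norm_sub_div_rpow (s : ℝ) {t : ℝ} (ht : 0 < t) (y : E) :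
    ∫ v, (1 + ‖v - y‖ / t) ^ (-s) ∂μ = t ^ (finrank ℝ E : ℝ) * ∫ w, (1 + ‖w‖) ^ (-s) ∂μ := by
  simp_rw [one_add_norm_sub_div_eq ht]
  rw [integral_sub_right_eq_self (fun v ↦ (1 + ‖t⁻¹ • v‖) ^ (-s)) y,
    Measure.integral_comp_smul μ (fun w ↦ (1 + ‖w‖) ^ (-s)), inv_pow, inv_inv,
    abs_of_pos (by positivity), rpow_natCast, smul_eq_mul]

end Rescaling

lemma integral_prod_le_integral_mul_integral {α β : Type*} [MeasurableSpace α]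
    [MeasurableSpace β] {μ : Measure α} {ν : Measure β} [SFinite μ] [SFinite ν]
    {f : α × β → ℝ} {g : α → ℝ} {h : β → ℝ}
    (hf : 0 ≤ f) (hg : Integrable g μ) (hh : Integrable h ν) (hle : ∀ x, f x ≤ g x.1 * h x.2) :
    ∫ x, f x ∂μ.prod ν ≤ (∫ a, g a ∂μ) * ∫ b, h b ∂ν := by
  rw [← integral_prod_mul]
  exact integral_mono_of_nonneg (.of_forall hf) (hg.mul_prod hh) (.of_forall hle)

section MixedWeight

variable {E F : Type*} [NormedAddCommGroup E] [NormedSpace ℝ E] [FiniteDimensional ℝ E]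
  [MeasurableSpace E] [BorelSpace E] {μ : Measure E} [μ.IsAddHaarMeasure]
  [NormedAddCommGroup F] [NormedSpace ℝ F] [FiniteDimensional ℝ F]
  [MeasurableSpace F] [BorelSpace F] {ν : Measure F} [ν.IsAddHaarMeasure]

theorem integral_mixed_weight_le {r α' α'' : ℝ} (hα' : (finrank ℝ E : ℝ) < 2 * α')
    (hα'' : 0 ≤ α'') (hr : (finrank ℝ F : ℝ) < 2 * r + α'') (y : E × F) :
    ∫ x, (1 + ‖x.2 - y.2‖ / (1 + ‖y.1‖)) ^ (-(2 * r)) *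
        (1 + (‖x.1 - y.1‖ + √‖x.2 - y.2‖)) ^ (-(2 * (α' + α''))) ∂μ.prod ν ≤
      (∫ u, (1 + ‖u‖) ^ (-(2 * α')) ∂μ) * (∫ w, (1 + ‖w‖) ^ (-(2 * r + α'')) ∂ν) *
        (1 + ‖y.1‖) ^ (finrank ℝ F : ℝ) := by
  have ht : 1 ≤ 1 + ‖y.1‖ := le_add_of_nonneg_right (norm_nonneg _)
  have hpos : 0 < 1 + ‖y.1‖ := by linarith
  calc _ ≤ (∫ u, (1 + ‖u - y.1‖) ^ (-(2 * α')) ∂μ) *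
        ∫ v, (1 + ‖v - y.2‖ / (1 + ‖y.1‖)) ^ (-(2 * r + α'')) ∂ν :=
        integral_prod_le_integral_mul_integral (fun _ ↦ by positivity)
          ((integrable_one_add_norm hα').comp_sub_right y.1)
          (integrable_one_add_norm_sub_div_rpow ν hr hpos y.2)
          fun x ↦ mixed_weight_le_product_weight
            (by linarith [(finrank ℝ E).cast_nonneg (α := ℝ)]) hα'' ht
            (norm_nonneg _) (norm_nonneg _)
    _ = _ := by
        rw [integral_sub_right_eq_self (fun u ↦ (1 + ‖u‖) ^ (-(2 * α'))),
          integral_one_add_norm_sub_div_rpow ν _ hpos]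
        ring

end MixedWeight

theorem weighted_integral_bound_dist_one (d₁ d₂ : ℕ)
    (r α : ℝ) (hr : r < d₂ / 2)
    (hαr : (d₁ + 2 * d₂ : ℝ) / 2 < α + 2 * r) :
    ∃ C : ℝ, ∀ y : EuclideanSpace ℝ (Fin d₁) × EuclideanSpace ℝ (Fin d₂),
      (∫ x : EuclideanSpace ℝ (Fin d₁) × EuclideanSpace ℝ (Fin d₂),
          (1 + ‖x.2 - y.2‖ / (1 + ‖y.1‖)) ^ (-(2 * r)) *
            (1 + (‖x.1 - y.1‖ + Real.sqrt ‖x.2 - y.2‖)) ^ (-(2 * α)))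
        ≤ C * (1 + ‖y.1‖) ^ (d₂ : ℝ) := by
  obtain ⟨α', hα'_gt, hα'_lt⟩ :=
    exists_between (show (d₁ : ℝ) / 2 < α - (d₂ - 2 * r) by linarith)
  refine ⟨(∫ u : EuclideanSpace ℝ (Fin d₁), (1 + ‖u‖) ^ (-(2 * α'))) *
    ∫ w : EuclideanSpace ℝ (Fin d₂), (1 + ‖w‖) ^ (-(2 * r + (α - α'))), fun y ↦ ?_⟩
  have key := integral_mixed_weight_le (μ := volume) (ν := volume) (r := r) (α' := α')
    (α'' := α - α') (by rw [finrank_euclideanSpace_fin]; linarith)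
    (by linarith) (by rw [finrank_euclideanSpace_fin]; linarith) y
  rwa [add_sub_cancel, finrank_euclideanSpace_fin, ← Measure.volume_eq_prod] at key
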